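/- arXiv:1804.04230 — 2 statements merged into one kernel-verified Lean document; each statement's English description precedes it below -/
import Mathlib

section
/- A state i of the linear system ẋ = Ax + Bu is herdable if and only if the i-th row of the controllability matrix 𝒞 = [B, AB, ..., A^{n-1}B] is not identically zero. -/
open Matrix NormedSpace Finset
open scoped ContDiff

attribute [local instance] Matrix.linftyOpNormedRing Matrix.linftyOpNormedAlgebra

def ctrbMat {n m : ℕ} (A : Matrix (Fin n) (Fin n) ℝ) (B : Matrix (Fin n) (Fin m) ℝ) :
    Matrix (Fin n) (Fin n × Fin m) ℝ :=
  Matrix.of fun i dj => (A ^ (dj.1 : ℕ) * B) i dj.2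

def Herdable {n m : ℕ} (A : Matrix (Fin n) (Fin n) ℝ) (B : Matrix (Fin n) (Fin m) ℝ)
    (X : Set (Fin n)) : Prop :=
  ∀ (x0 : Fin n → ℝ) (h : ℝ), 0 ≤ h →
    ∃ (tf : ℝ) (u : ℝ → Fin m → ℝ) (x : ℝ → Fin n → ℝ),
      0 ≤ tf ∧ x 0 = x0 ∧
      (∀ t ∈ Set.Icc (0 : ℝ) tf, HasDerivAt x (A.mulVec (x t) + B.mulVec (u t)) t) ∧
      ∀ i ∈ X, h ≤ x tf i


lemma cayley {n : ℕ} (A : Matrix (Fin n) (Fin n) ℝ) :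
    A ^ n = ∑ k ∈ Finset.range n, (-(A.charpoly.coeff k)) • A ^ k := by
  have h := A.aeval_self_charpoly
  rw [Polynomial.aeval_eq_sum_range] at h
  have hdeg : A.charpoly.natDegree = n := by
    rw [A.charpoly_natDegree_eq_dim, Fintype.card_fin]
  rw [hdeg, Finset.sum_range_succ] at h
  have hc : A.charpoly.coeff n = 1 := by
    have := (A.charpoly_monic).coeff_natDegree; rwa [hdeg] at this
  rw [hc, one_smul] at h
  have h1 : A ^ n = -∑ k ∈ Finset.range n, A.charpoly.coeff k • A ^ k := by
    rw [eq_neg_iff_add_eq_zero, add_comm]; exact h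
  rw [h1, ← Finset.sum_neg_distrib]
  exact Finset.sum_congr rfl fun k _ => (neg_smul _ _).symm

/-- the entry continuous linear map `M ↦ M i j`. -/
noncomputable def entryCLM {n : ℕ} (i j : Fin n) :
    Matrix (Fin n) (Fin n) ℝ →L[ℝ] ℝ :=
  LinearMap.toContinuousLinearMap
    { toFun := fun M => M i j
      map_add' := by intro x y; rfl
      map_smul' := by intro c x; rfl }

@[simp] lemma entryCLM_apply {n : ℕ} (i j : Fin n) (M : Matrix (Fin n) (Fin n) ℝ) :
    entryCLM i j M = M i j := rfl

lemma sum_mulVec' {n m : ℕ} {β : Type*} (s : Finset β) (f : β → Matrix (Fin n) (Fin m) ℝ)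
    (v : Fin m → ℝ) : (∑ k ∈ s, f k) *ᵥ v = ∑ k ∈ s, (f k) *ᵥ v := by
  ext r
  simp only [Matrix.mulVec, dotProduct, Matrix.sum_apply, Finset.sum_apply,
    Finset.sum_mul]
  exact Finset.sum_comm

lemma hasDerivAt_exp_mulVec {n : ℕ} (A : Matrix (Fin n) (Fin n) ℝ) (x0 : Fin n → ℝ) (t : ℝ)
    (r : Fin n) :
    HasDerivAt (fun t : ℝ => ((exp (t • A)) *ᵥ x0) r)
      ((A *ᵥ ((exp (t • A)) *ᵥ x0)) r) t := by
  have h2 := hasDerivAt_exp_smul_const' A t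
  have hent : ∀ c, HasDerivAt (fun t : ℝ => exp (t • A) r c)
      ((A * exp (t • A)) r c) t := by
    intro c
    have h3 := (entryCLM r c).hasFDerivAt.comp_hasDerivAt t h2
    exact h3
  have hsum := HasDerivAt.fun_sum (fun c (_ : c ∈ Finset.univ) => (hent c).mul_const (x0 c))
  have hfun : (fun t : ℝ => ∑ c, exp (t • A) r c * x0 c)
      = fun t : ℝ => ((exp (t • A)) *ᵥ x0) r := rfl
  have hval : (∑ c, (A * exp (t • A)) r c * x0 c) = (A *ᵥ ((exp (t • A)) *ᵥ x0)) r := by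
    rw [Matrix.mulVec_mulVec]; rfl
  rw [hfun, hval] at hsum
  exact hsum

noncomputable def eFun (s : ℝ) (J : ℕ) (l : ℕ) : ℝ → ℝ :=
  fun t => if l ≤ J then s / (J - l).factorial * (t - 1) ^ (J - l) else 0

noncomputable def Fseq (cc : ℕ → ℝ) (g : ℝ → ℝ) : ℕ → ℝ → ℝ
  | 0 => g
  | j + 1 => fun t => deriv (Fseq cc g j) t - cc j * g t

lemma eFun_contDiff (s : ℝ) (J l : ℕ) : ContDiff ℝ ∞ (eFun s J l) := by
  unfold eFun
  split
  · exact contDiff_const.mul ((contDiff_id.sub contDiff_const).pow _)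
  · exact contDiff_const

lemma eFun_hasDerivAt (s : ℝ) (J l : ℕ) (t : ℝ) :
    HasDerivAt (eFun s J l) (eFun s J (l + 1) t) t := by
  rcases lt_trichotomy l J with hl | hl | hl
  · have h1 : eFun s J l = fun t => s / (J - l).factorial * (t - 1) ^ (J - l) := by
      unfold eFun; simp [hl.le]
    have h2 : eFun s J (l + 1) t = s / (J - (l + 1)).factorial * (t - 1) ^ (J - (l + 1)) := by
      unfold eFun; rw [if_pos (by omega)]
    rw [h1, h2]
    have hK : J - l = (J - (l + 1)) + 1 := by omega
    have hbase : HasDerivAt (fun t : ℝ => t - 1) 1 t := (hasDerivAt_id t).sub_const 1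
    have hpow := hbase.pow (J - l)
    have := hpow.const_mul (s / (J - l).factorial)
    convert this using 1
    · rfl
    · rfl
    · rfl
    rw [hK]
    have : ((J - (l+1)) + 1).factorial = ((J - (l+1)) + 1) * (J - (l+1)).factorial :=
      Nat.factorial_succ _
    rw [Nat.add_sub_cancel, this, Nat.cast_mul]
    field_simp [this]
  · have h1 : eFun s J l = fun _ : ℝ => s / 1 := by
      unfold eFun
      funext t'
      rw [if_pos hl.le, hl, Nat.sub_self]
      simp
    have h2 : eFun s J (l + 1) t = 0 := by
      unfold eFun
      rw [if_neg (by omega)]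
    rw [h1, h2]
    exact hasDerivAt_const t _
  · have h1 : eFun s J l = fun _ : ℝ => 0 := by
      unfold eFun
      funext t'
      rw [if_neg (by omega)]
    have h2 : eFun s J (l + 1) t = 0 := by
      unfold eFun; rw [if_neg (by omega)]
    rw [h1, h2]
    exact hasDerivAt_const t _

lemma eFun_at_one (s : ℝ) (J l : ℕ) : eFun s J l 1 = if l = J then s else 0 := by
  unfold eFun
  rcases lt_trichotomy l J with hl | hl | hl
  · rw [if_pos hl.le, if_neg hl.ne, sub_self, zero_pow (by omega : J - l ≠ 0), mul_zero]
  · rw [if_pos hl.le, if_pos hl, hl, Nat.sub_self]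
    simp
  · rw [if_neg (by omega), if_neg hl.ne']

lemma Fseq_contDiff (cc : ℕ → ℝ) (g : ℝ → ℝ) (hg : ContDiff ℝ ∞ g) (j : ℕ) :
    ContDiff ℝ ∞ (Fseq cc g j) := by
  induction j with
  | zero => exact hg
  | succ j ih =>
    show ContDiff ℝ ∞ fun t => deriv (Fseq cc g j) t - cc j * g t
    exact ((contDiff_infty_iff_deriv.1 ih).2).sub (contDiff_const.mul hg)

lemma Fseq_hasDerivAt (cc : ℕ → ℝ) (g : ℝ → ℝ) (hg : ContDiff ℝ ∞ g) (j : ℕ) (t : ℝ) :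
    HasDerivAt (Fseq cc g j) (Fseq cc g (j + 1) t + cc j * g t) t := by
  have hd : DifferentiableAt ℝ (Fseq cc g j) t :=
    ((Fseq_contDiff cc g hg j).differentiable (by norm_num)).differentiableAt
  have h1 := hd.hasDerivAt
  have h2 : Fseq cc g (j + 1) t + cc j * g t = deriv (Fseq cc g j) t := by
    show deriv (Fseq cc g j) t - cc j * g t + cc j * g t = _
    ring
  rwa [h2]

lemma Fseq_eq_of_eqOn (cc : ℕ → ℝ) (g₁ g₂ : ℝ → ℝ) (S : Set ℝ) (hS : IsOpen S)
    (heq : ∀ t ∈ S, g₁ t = g₂ t) (j : ℕ) : ∀ t ∈ S, Fseq cc g₁ j t = Fseq cc g₂ j t := by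
  induction j with
  | zero => exact heq
  | succ j ih =>
    intro t ht
    show deriv (Fseq cc g₁ j) t - cc j * g₁ t = deriv (Fseq cc g₂ j) t - cc j * g₂ t
    have hev : Fseq cc g₁ j =ᶠ[nhds t] Fseq cc g₂ j :=
      Filter.eventually_of_mem (hS.mem_nhds ht) (ih)
    rw [hev.deriv_eq, heq t ht]

lemma Fseq_zero_fun (cc : ℕ → ℝ) (j : ℕ) : Fseq cc (fun _ => 0) j = fun _ => 0 := by
  induction j with
  | zero => rfl
  | succ j ih =>
    show (fun t => deriv (Fseq cc (fun _ => 0) j) t - cc j * 0) = fun _ => 0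
    rw [ih]
    simp [deriv_const]

lemma Fseq_repr (cc : ℕ → ℝ) (s : ℝ) (J : ℕ) (j : ℕ) :
    ∃ γ : ℕ → ℝ, γ j = 1 ∧ ∀ t, Fseq cc (eFun s J 0) j t
      = ∑ l ∈ range (j + 1), γ l * eFun s J l t := by
  induction j with
  | zero =>
    exact ⟨fun _ => 1, rfl, fun t => by simp [Fseq]⟩
  | succ j ih =>
    obtain ⟨γ, hγ, hrep⟩ := ih
    refine ⟨fun l => if l = 0 then -(cc j) else γ (l - 1), by simp [hγ], fun t => ?_⟩
    have hF : Fseq cc (eFun s J 0) j = fun t => ∑ l ∈ range (j + 1), γ l * eFun s J l t :=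
      funext hrep
    have hder : HasDerivAt (Fseq cc (eFun s J 0) j)
        (∑ l ∈ range (j + 1), γ l * eFun s J (l + 1) t) t := by
      rw [hF]
      exact HasDerivAt.fun_sum fun l _ => (eFun_hasDerivAt s J l t).const_mul (γ l)
    show deriv (Fseq cc (eFun s J 0) j) t - cc j * eFun s J 0 t = _
    rw [hder.deriv]
    rw [Finset.sum_range_succ' (fun l => (if l = 0 then -(cc j) else γ (l - 1)) * eFun s J l t)
      (j + 1)]
    simp only [Nat.add_sub_cancel, if_true, if_neg (Nat.succ_ne_zero _)]
    ring

lemma Fseq_eFun_one_lt (cc : ℕ → ℝ) (s : ℝ) {J j : ℕ} (hj : j < J) :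
    Fseq cc (eFun s J 0) j 1 = 0 := by
  obtain ⟨γ, _, hrep⟩ := Fseq_repr cc s J j
  rw [hrep 1]
  refine Finset.sum_eq_zero fun l hl => ?_
  rw [eFun_at_one, if_neg (by have := Finset.mem_range.1 hl; omega), mul_zero]

lemma Fseq_eFun_one_self (cc : ℕ → ℝ) (s : ℝ) (J : ℕ) :
    Fseq cc (eFun s J 0) J 1 = s := by
  obtain ⟨γ, hγ, hrep⟩ := Fseq_repr cc s J J
  rw [hrep 1]
  rw [Finset.sum_eq_single_of_mem J (Finset.mem_range.2 (Nat.lt_succ_self J))]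
  · rw [eFun_at_one, if_pos rfl, hγ, one_mul]
  · intro l _ hne
    rw [eFun_at_one, if_neg hne, mul_zero]

lemma herdable_backward {n m : ℕ} (A : Matrix (Fin n) (Fin n) ℝ) (B : Matrix (Fin n) (Fin m) ℝ)
    (i : Fin n) (hex : ∃ c : Fin n × Fin m, ctrbMat A B i c ≠ 0) :
    Herdable A B {i} := by
  classical
  obtain ⟨⟨d, j0⟩, hd0⟩ := hex
  have hd : (A ^ (d : ℕ) * B) i j0 ≠ 0 := hd0
  have hn : 0 < n := i.pos
  have hdn : (d : ℕ) < n := d.isLt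
  set bcol : Fin n → ℝ := fun r => B r j0 with hbcol
  set κ : ℕ → ℝ := fun j => (A ^ (n - 1 - j) * B) i j0 with hκ
  have hκd : κ (n - 1 - (d : ℕ)) ≠ 0 := by
    have he : n - 1 - (n - 1 - (d : ℕ)) = (d : ℕ) := by omega
    rw [hκ]
    simpa [he] using hd
  have hJne : ((Finset.range n).filter (fun j => κ j ≠ 0)).Nonempty :=
    ⟨n - 1 - d, by
      simp only [Finset.mem_filter, Finset.mem_range]
      exact ⟨by omega, hκd⟩⟩
  set J := ((Finset.range n).filter (fun j => κ j ≠ 0)).max' hJne with hJ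
  have hJmem := Finset.max'_mem _ hJne
  rw [Finset.mem_filter, Finset.mem_range] at hJmem
  obtain ⟨hJn, hJκ⟩ := hJmem
  have hJmax : ∀ j, j < n → J < j → κ j = 0 := by
    intro j hjn hJj
    by_contra hne
    have hle := Finset.le_max' ((Finset.range n).filter (fun j => κ j ≠ 0)) j
      (Finset.mem_filter.2 ⟨Finset.mem_range.2 hjn, hne⟩)
    rw [← hJ] at hle
    omega
  intro x0 h hh
  set w : ℝ := ((exp ((1 : ℝ) • A)) *ᵥ x0) i with hw
  set s : ℝ := (h - w) / κ J with hs
  set cc : ℕ → ℝ := fun j => -(A.charpoly.coeff (n - 1 - j)) with hcc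
  set φ : ℝ → ℝ := fun t => Real.smoothTransition (3 * t - 1) with hφ
  set g : ℝ → ℝ := fun t => φ t * eFun s J 0 t with hg
  have hgc : ContDiff ℝ ∞ g := by
    rw [hg]
    apply ContDiff.mul
    · rw [hφ]
      exact Real.smoothTransition.contDiff.comp
        ((contDiff_const.mul contDiff_id).sub contDiff_const)
    · exact eFun_contDiff s J 0
  set F := Fseq cc g with hF
  set v : ℕ → Fin n → ℝ := fun j => (A ^ (n - 1 - j)) *ᵥ bcol with hv
  set y : ℝ → Fin n → ℝ := fun t => ∑ j ∈ Finset.range n, F j t • v j with hy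
  refine ⟨1, fun t => Pi.single j0 (F n t),
    fun t => (exp (t • A)) *ᵥ x0 + y t, zero_le_one, ?_, ?_, ?_⟩
  · -- initial condition
    have h1 : (exp ((0 : ℝ) • A)) *ᵥ x0 = x0 := by
      rw [zero_smul, exp_zero, Matrix.one_mulVec]
    have hzero : ∀ j, F j 0 = 0 := by
      intro j
      have heq : ∀ t ∈ Set.Iio (1 / 3 : ℝ), g t = (fun _ => (0 : ℝ)) t := by
        intro t ht
        have hφ0 : φ t = 0 := by
          rw [hφ]
          exact Real.smoothTransition.zero_of_nonpos
            (by simp only [Set.mem_Iio] at ht; linarith)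
        rw [hg]
        simp [hφ0]
      have := Fseq_eq_of_eqOn cc g (fun _ => 0) _ isOpen_Iio heq j 0 (by norm_num)
      rw [hF, this, Fseq_zero_fun]
    have h2 : y 0 = 0 := by
      rw [hy]
      funext r
      simp [hzero]
    show exp ((0 : ℝ) • A) *ᵥ x0 + y 0 = x0
    rw [h2, h1, add_zero]
  · -- ODE
    intro t _
    rw [hasDerivAt_pi]
    intro r
    have hpart1 := hasDerivAt_exp_mulVec A x0 t r
    have hpart2 : HasDerivAt (fun t => y t r)
        (∑ j ∈ Finset.range n, (F (j + 1) t + cc j * g t) * v j r) t := by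
      have hfn : (fun t => y t r) = fun t => ∑ j ∈ Finset.range n, F j t * v j r := by
        funext t'
        rw [hy]
        simp [Finset.sum_apply]
      rw [hfn]
      exact HasDerivAt.fun_sum fun j _ => (Fseq_hasDerivAt cc g hgc j t).mul_const (v j r)
    -- the key algebraic identity
    have hvec : (∑ j ∈ Finset.range n, (F (j + 1) t + cc j * g t) • v j)
        = A *ᵥ y t + F n t • bcol := by
      have hAy : A *ᵥ y t = ∑ j ∈ Finset.range n, F j t • ((A ^ (n - j)) *ᵥ bcol) := by
        rw [hy]
        have hdist : A *ᵥ (∑ j ∈ Finset.range n, F j t • v j)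
            = ∑ j ∈ Finset.range n, A *ᵥ (F j t • v j) :=
          map_sum A.mulVecLin _ _
        rw [hdist]
        refine Finset.sum_congr rfl fun j hj => ?_
        have hjn : j < n := Finset.mem_range.1 hj
        have he : n - j = (n - 1 - j) + 1 := by omega
        simp only [hv]
        rw [Matrix.mulVec_smul, Matrix.mulVec_mulVec, he, pow_succ']
      have hsplit : (∑ j ∈ Finset.range n, (F (j + 1) t + cc j * g t) • v j)
          = (∑ j ∈ Finset.range n, F (j + 1) t • v j)
            + g t • (∑ j ∈ Finset.range n, cc j • v j) := by
        rw [Finset.smul_sum, ← Finset.sum_add_distrib]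
        refine Finset.sum_congr rfl fun j _ => ?_
        rw [add_smul, smul_smul, mul_comm (cc j) (g t)]
      have hCH : (∑ j ∈ Finset.range n, cc j • v j) = (A ^ n) *ᵥ bcol := by
        have hre : (∑ j ∈ Finset.range n, cc j • v j)
            = ∑ k ∈ Finset.range n, (-(A.charpoly.coeff k)) • ((A ^ k) *ᵥ bcol) := by
          refine Finset.sum_bij' (fun j _ => n - 1 - j) (fun k _ => n - 1 - k) ?_ ?_ ?_ ?_ ?_
          · intro a ha; simp only [Finset.mem_range] at ha ⊢; omega
          · intro a ha; simp only [Finset.mem_range] at ha ⊢; omega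
          · intro a ha; simp only [Finset.mem_range] at ha ⊢; omega
          · intro a ha; simp only [Finset.mem_range] at ha ⊢; omega
          · intro a ha
            simp only [hcc, hv]
        rw [hre]
        have : (∑ k ∈ Finset.range n, (-(A.charpoly.coeff k)) • ((A ^ k) *ᵥ bcol))
            = (∑ k ∈ Finset.range n, (-(A.charpoly.coeff k)) • A ^ k) *ᵥ bcol := by
          rw [sum_mulVec']
          refine Finset.sum_congr rfl fun k _ => ?_
          rw [Matrix.smul_mulVec]
        rw [this, ← cayley]
      have hshift : (∑ j ∈ Finset.range n, F (j + 1) t • v j)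
          = (∑ j ∈ Finset.range n, F j t • ((A ^ (n - j)) *ᵥ bcol))
            + F n t • bcol - g t • ((A ^ n) *ᵥ bcol) := by
        have hvj : ∀ j, v j = (A ^ (n - (j + 1))) *ᵥ bcol := by
          intro j
          have he : n - 1 - j = n - (j + 1) := by omega
          simp only [hv, he]
        have h1 : (∑ j ∈ Finset.range n, F (j + 1) t • v j)
            = ∑ j ∈ Finset.range n, F (j + 1) t • ((A ^ (n - (j + 1))) *ᵥ bcol) := by
          refine Finset.sum_congr rfl fun j _ => ?_
          rw [hvj j]
        rw [h1]
        have h2 := Finset.sum_range_succ' (fun j => F j t • ((A ^ (n - j)) *ᵥ bcol)) n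
        have h3 := Finset.sum_range_succ (fun j => F j t • ((A ^ (n - j)) *ᵥ bcol)) n
        -- h2 : ∑_{j<n+1} = ∑_{j<n} f (j+1) + f 0 ; h3 : ∑_{j<n+1} = ∑_{j<n} + f n
        have h4 : (∑ j ∈ Finset.range n, F (j + 1) t • ((A ^ (n - (j + 1))) *ᵥ bcol))
            = (∑ j ∈ Finset.range (n + 1), F j t • ((A ^ (n - j)) *ᵥ bcol))
              - F 0 t • ((A ^ (n - 0)) *ᵥ bcol) := by
          rw [h2]; abel
        rw [h4, h3]
        have h5 : F n t • ((A ^ (n - n)) *ᵥ bcol) = F n t • bcol := by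
          rw [Nat.sub_self, pow_zero, Matrix.one_mulVec]
        have h6 : F 0 t • ((A ^ (n - 0)) *ᵥ bcol) = g t • ((A ^ n) *ᵥ bcol) := by
          rw [Nat.sub_zero]; rfl
        rw [h5, h6]
      rw [hsplit, hshift, hCH, hAy]
      abel
    have hval : ((exp (t • A)) *ᵥ x0 + y t) = (fun t => (exp (t • A)) *ᵥ x0 + y t) t := rfl
    have hBu : (B *ᵥ Pi.single j0 (F n t)) = F n t • bcol := by
      rw [Matrix.mulVec_single]
      funext r'
      rw [hbcol]
      simp [mul_comm]
    have htot := hpart1.add hpart2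
    have hgoal : (A *ᵥ ((exp (t • A)) *ᵥ x0)) r
        + (∑ j ∈ Finset.range n, (F (j + 1) t + cc j * g t) * v j r)
        = (A *ᵥ ((fun t => (exp (t • A)) *ᵥ x0 + y t) t) + B *ᵥ Pi.single j0 (F n t)) r := by
      have hc : (∑ j ∈ Finset.range n, (F (j + 1) t + cc j * g t) * v j r)
          = (∑ j ∈ Finset.range n, (F (j + 1) t + cc j * g t) • v j) r := by
        simp only [Finset.sum_apply, Pi.smul_apply, smul_eq_mul]
      rw [hc, hvec, hBu]
      simp only [Matrix.mulVec_add, Pi.add_apply]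
      ring
    rw [hgoal] at htot
    exact htot
  · -- final condition
    intro i' hi'
    rw [Set.mem_singleton_iff] at hi'
    rw [hi']
    have hFG : ∀ j, F j 1 = Fseq cc (eFun s J 0) j 1 := by
      intro j
      have heq : ∀ t ∈ Set.Ioi (2 / 3 : ℝ), g t = eFun s J 0 t := by
        intro t ht
        have hφ1 : φ t = 1 := by
          rw [hφ]
          exact Real.smoothTransition.one_of_one_le
            (by simp only [Set.mem_Ioi] at ht; linarith)
        rw [hg]
        simp [hφ1]
      exact Fseq_eq_of_eqOn cc g (eFun s J 0) _ isOpen_Ioi heq j 1 (by norm_num)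
    have hvκ : ∀ j, v j i = κ j := by
      intro j
      rw [hv, hκ, hbcol]
      simp [Matrix.mulVec, dotProduct, Matrix.mul_apply]
    have hy1 : y 1 i = s * κ J := by
      simp only [hy]
      rw [Finset.sum_apply]
      have : ∀ j ∈ Finset.range n, j ≠ J → (F j 1 • v j) i = 0 := by
        intro j hj hne
        rcases lt_or_gt_of_ne hne with hlt | hgt
        · rw [Pi.smul_apply, hFG j, Fseq_eFun_one_lt cc s hlt, zero_smul]
        · rw [Pi.smul_apply, hvκ j, hJmax j (Finset.mem_range.1 hj) hgt, smul_zero]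
      rw [Finset.sum_eq_single_of_mem J (Finset.mem_range.2 hJn) this]
      rw [Pi.smul_apply, hFG J, Fseq_eFun_one_self cc s J, hvκ J, smul_eq_mul]
    have hsκ : s * κ J = h - w := by
      rw [hs]
      exact div_mul_cancel₀ _ hJκ
    show h ≤ ((exp ((1 : ℝ) • A)) *ᵥ x0 + y 1) i
    have heq : ((exp ((1 : ℝ) • A)) *ᵥ x0 + y 1) i = h := by
      rw [Pi.add_apply, hy1, hsκ, ← hw]
      ring
    rw [heq]

lemma row_pow_zero {n m : ℕ} (A : Matrix (Fin n) (Fin n) ℝ) (B : Matrix (Fin n) (Fin m) ℝ)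
    (i : Fin n) (hn : 0 < n)
    (hz : ∀ (d : Fin n) (j : Fin m), (A ^ (d : ℕ) * B) i j = 0) :
    ∀ (k : ℕ) (j : Fin m), (A ^ k * B) i j = 0 := by
  intro k
  induction k using Nat.strong_induction_on with
  | _ k ih =>
    intro j
    rcases lt_or_ge k n with hk | hk
    · exact hz ⟨k, hk⟩ j
    · have hkn : A ^ k * B = A ^ (k - n) * ((A ^ n) * B) := by
        rw [← Matrix.mul_assoc, ← pow_add, Nat.sub_add_cancel hk]
      rw [hkn, cayley A, Matrix.sum_mul, Matrix.mul_sum, Matrix.sum_apply]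
      refine Finset.sum_eq_zero fun l hl => ?_
      have hlt : k - n + l < k := by
        have := Finset.mem_range.1 hl; omega
      rw [Matrix.smul_mul, Matrix.mul_smul, ← Matrix.mul_assoc, ← pow_add,
        Matrix.smul_apply, ih _ hlt j, smul_zero]

/-- the entry-of-product continuous linear map `M ↦ (M * B) i j`. -/
noncomputable def prodEntryCLM {n m : ℕ} (B : Matrix (Fin n) (Fin m) ℝ) (i : Fin n) (j : Fin m) :
    Matrix (Fin n) (Fin n) ℝ →L[ℝ] ℝ :=
  LinearMap.toContinuousLinearMap
    { toFun := fun M => (M * B) i j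
      map_add' := by intro x y; simp [Matrix.add_mul]
      map_smul' := by intro c x; simp [Matrix.smul_mul] }

lemma row_exp_zero {n m : ℕ} (A : Matrix (Fin n) (Fin n) ℝ) (B : Matrix (Fin n) (Fin m) ℝ)
    (i : Fin n) (hn : 0 < n)
    (hz : ∀ (d : Fin n) (j : Fin m), (A ^ (d : ℕ) * B) i j = 0) :
    ∀ (s : ℝ) (j : Fin m), (exp (s • A) * B) i j = 0 := by
  intro s j
  have hpow := row_pow_zero A B i hn hz
  have h1 : (exp (s • A) * B) i j = prodEntryCLM B i j (exp (s • A)) := rfl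
  rw [h1, exp_eq_tsum (𝕂 := ℝ)]
  have hsum : Summable fun k : ℕ => ((Nat.factorial k : ℝ)⁻¹) • (s • A) ^ k :=
    expSeries_summable' (s • A)
  rw [ContinuousLinearMap.map_tsum _ hsum]
  have hterm : ∀ k : ℕ, prodEntryCLM B i j (((Nat.factorial k : ℝ)⁻¹) • (s • A) ^ k) = 0 := by
    intro k
    rw [smul_pow, ← smul_assoc, (prodEntryCLM B i j).map_smul]
    have h2 : prodEntryCLM B i j (A ^ k) = 0 := hpow k j
    rw [h2, smul_zero]
  simp only [hterm, tsum_zero]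

lemma herdable_forward {n m : ℕ} (A : Matrix (Fin n) (Fin n) ℝ) (B : Matrix (Fin n) (Fin m) ℝ)
    (i : Fin n) (hH : Herdable A B {i}) (hz : ∀ c : Fin n × Fin m, ctrbMat A B i c = 0) :
    False := by
  have hn : 0 < n := i.pos
  have hz' : ∀ (d : Fin n) (j : Fin m), (A ^ (d : ℕ) * B) i j = 0 := fun d j => hz (d, j)
  have hrow := row_exp_zero A B i hn hz'
  obtain ⟨tf, u, x, htf, hx0, hode, hfin⟩ := hH 0 1 zero_le_one
  have hfin' : (1 : ℝ) ≤ x tf i := hfin i rfl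
  rcases eq_or_lt_of_le htf with h0 | h0
  · rw [← h0] at hfin'
    rw [hx0] at hfin'
    exact absurd hfin' (by norm_num)
  · set ψ : ℝ → ℝ := fun t => ∑ r, (exp ((tf - t) • A)) i r * x t r with hψ
    have key : ∀ t ∈ Set.Icc (0 : ℝ) tf, HasDerivAt ψ 0 t := by
      intro t ht
      set E := exp ((tf - t) • A) with hE
      have h1 : HasDerivAt (fun t : ℝ => tf - t) (-1) t := (hasDerivAt_id t).const_sub tf
      have h2 : HasDerivAt (fun t : ℝ => exp ((tf - t) • A)) (-(A * E)) t := by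
        have := (hasDerivAt_exp_smul_const' A (tf - t)).scomp t h1
        simp at this
        exact this
      have hent : ∀ r, HasDerivAt (fun t : ℝ => (exp ((tf - t) • A)) i r)
          ((-(A * E)) i r) t := by
        intro r
        have h3 := (entryCLM i r).hasFDerivAt.comp_hasDerivAt t h2
        exact h3
      have hxr : ∀ r, HasDerivAt (fun t => x t r) ((A.mulVec (x t) + B.mulVec (u t)) r) t :=
        fun r => hasDerivAt_pi.1 (hode t ht) r
      have hD : HasDerivAt ψ
          (∑ r, ((-(A * E)) i r * x t r + E i r * (A.mulVec (x t) + B.mulVec (u t)) r)) t :=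
        HasDerivAt.fun_sum fun r _ => (hent r).mul (hxr r)
      have hzero : (∑ r, ((-(A * E)) i r * x t r
          + E i r * (A.mulVec (x t) + B.mulVec (u t)) r)) = 0 := by
        have hcomm : A * E = E * A := by
          have hc : Commute A ((tf - t) • A) := (Commute.refl A).smul_right _
          exact (hc.exp_right).eq
        have e1 : ((A * E).mulVec (x t)) i = ∑ r, (A * E) i r * x t r := rfl
        have e2 : ((E * A).mulVec (x t)) i = ∑ r, E i r * (A.mulVec (x t)) r := by
          rw [← Matrix.mulVec_mulVec]; rfl
        have e3 : ((E * B).mulVec (u t)) i = ∑ r, E i r * (B.mulVec (u t)) r := by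
          rw [← Matrix.mulVec_mulVec]; rfl
        have split : (∑ r, ((-(A * E)) i r * x t r
            + E i r * (A.mulVec (x t) + B.mulVec (u t)) r))
            = -(((A * E).mulVec (x t)) i) + (((E * A).mulVec (x t)) i)
              + (((E * B).mulVec (u t)) i) := by
          rw [e1, e2, e3, ← Finset.sum_neg_distrib, ← Finset.sum_add_distrib,
            ← Finset.sum_add_distrib]
          refine Finset.sum_congr rfl fun r _ => ?_
          simp only [Matrix.neg_apply, Pi.add_apply]
          ring
        rw [split, hcomm, neg_add_cancel, zero_add]
        have e4 : ((E * B).mulVec (u t)) i = ∑ j, (E * B) i j * u t j := rfl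
        rw [e4]
        exact Finset.sum_eq_zero fun j _ => by rw [hrow (tf - t) j, zero_mul]
      rwa [hzero] at hD
    have hcont : ContinuousOn ψ (Set.Icc 0 tf) :=
      fun t ht => ((key t ht).continuousAt).continuousWithinAt
    have hconst := constant_of_has_deriv_right_zero hcont
      (fun t ht => (key t (Set.Ico_subset_Icc_self ht)).hasDerivWithinAt)
    have h1 : ψ tf = ψ 0 := hconst tf (Set.right_mem_Icc.2 htf)
    have h2 : ψ tf = x tf i := by
      simp only [hψ, sub_self, zero_smul, exp_zero]
      rw [Finset.sum_congr rfl fun r (_ : r ∈ Finset.univ) => by rw [Matrix.one_apply]]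
      simp [Finset.sum_ite_eq]
    have h3 : ψ 0 = 0 := by
      simp [hψ, hx0]
    rw [h2, h3] at h1
    linarith

/-- a state `i` is herdable iff the `i`-th row of the controllability matrix
is not identically zero. -/
theorem state_herdable_iff_row_ctrb_ne_zero
    {n m : ℕ} (A : Matrix (Fin n) (Fin n) ℝ) (B : Matrix (Fin n) (Fin m) ℝ) (i : Fin n) :
    Herdable A B {i} ↔ ∃ c : Fin n × Fin m, ctrbMat A B i c ≠ 0 := by
  constructor
  · intro hH
    by_contra hc
    push_neg at hc
    exact herdable_forward A B i hH hc
  · exact herdable_backward A B i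
end

section
/- If A ∈ ℝ^{n×n} is Metzler (all off-diagonal entries nonnegative) and B ∈ ℝ^{n×m} is entrywise nonnegative, and the system graph is input connectable (every state is reachable from some input by a directed walk through nonzero entries), then for every state i there exist d ∈ {1,...,n} and input j with (A^{d-1}B)_{i,j} > 0, and hence the system is completely herdable. -/
open Matrix

/-- A walk of length `d+1` in the system graph from input node `u j` to state node `x i`:
it consists of the edge `u j → x (p 0)` (present iff `B (p 0) j ≠ 0`) followed by the `d`
state edges `x (p t) → x (p (t+1))` (present iff the corresponding entry of `A` is nonzero),
ending at `p (last) = i`. -/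
def IsWalk {n m : ℕ} (A : Matrix (Fin n) (Fin n) ℝ) (B : Matrix (Fin n) (Fin m) ℝ)
    (j : Fin m) (i : Fin n) (d : ℕ) (p : Fin (d + 1) → Fin n) : Prop :=
  B (p 0) j ≠ 0 ∧ (∀ t : Fin d, A (p t.succ) (p t.castSucc) ≠ 0) ∧ p (Fin.last d) = i

/-- The weight of a walk: the product of the weights of its edges. -/
def walkWeight {n m : ℕ} (A : Matrix (Fin n) (Fin n) ℝ) (B : Matrix (Fin n) (Fin m) ℝ)
    (j : Fin m) {d : ℕ} (p : Fin (d + 1) → Fin n) : ℝ :=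
  B (p 0) j * ∏ t : Fin d, A (p t.succ) (p t.castSucc)

/-- State node `x i` is reachable from input node `u j` by a directed walk. -/
def Reach {n m : ℕ} (A : Matrix (Fin n) (Fin n) ℝ) (B : Matrix (Fin n) (Fin m) ℝ)
    (j : Fin m) (i : Fin n) : Prop :=
  ∃ (d : ℕ) (p : Fin (d + 1) → Fin n), IsWalk A B j i d p

lemma isWalk_snoc {n m : ℕ} {A : Matrix (Fin n) (Fin n) ℝ} {B : Matrix (Fin n) (Fin m) ℝ}
    {j : Fin m} {k i : Fin n} {d : ℕ} {p : Fin (d+1) → Fin n} (hp : IsWalk A B j k d p)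
    (hA : A i k ≠ 0) : IsWalk A B j i (d+1) (Fin.snoc p i) := by
  obtain ⟨h0, he, hl⟩ := hp
  refine ⟨?_, ?_, ?_⟩
  · have : (0 : Fin (d+2)) = (0 : Fin (d+1)).castSucc := by simp
    rw [this, Fin.snoc_castSucc]; exact h0
  · intro t
    induction t using Fin.lastCases with
    | last =>
      have h1 : (Fin.last d).succ = Fin.last (d+1) := by
        ext; simp [Fin.last]
      rw [h1, Fin.snoc_last]
      have h2 : (Fin.last d).castSucc = ((Fin.last d) : Fin (d+1)).castSucc := rfl
      rw [Fin.snoc_castSucc, hl]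
      exact hA
    | cast s =>
      rw [Fin.succ_castSucc, Fin.snoc_castSucc, Fin.snoc_castSucc]
      exact he s
  · exact Fin.snoc_last _ _

lemma walk_of_ne_zero {n m : ℕ} {A : Matrix (Fin n) (Fin n) ℝ} {B : Matrix (Fin n) (Fin m) ℝ} :
    ∀ d (i : Fin n) (j : Fin m), (A ^ d * B) i j ≠ 0 → ∃ p, IsWalk A B j i d p := by
  intro d
  induction d with
  | zero =>
    intro i j h
    rw [pow_zero, Matrix.one_mul] at h
    exact ⟨fun _ => i, h, fun t => t.elim0, rfl⟩
  | succ e ih =>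
    intro i j h
    rw [pow_succ', Matrix.mul_assoc, Matrix.mul_apply] at h
    obtain ⟨k, _, hk⟩ := Finset.exists_ne_zero_of_sum_ne_zero h
    have hA : A i k ≠ 0 := fun h0 => hk (by rw [h0, zero_mul])
    have h2 : (A ^ e * B) k j ≠ 0 := fun h0 => hk (by rw [h0, mul_zero])
    obtain ⟨p, hp⟩ := ih k j h2
    exact ⟨Fin.snoc p i, isWalk_snoc hp hA⟩
lemma isWalk_shorten {n m : ℕ} {A : Matrix (Fin n) (Fin n) ℝ} {B : Matrix (Fin n) (Fin m) ℝ}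
    {j : Fin m} {i : Fin n} {d : ℕ} {p : Fin (d+1) → Fin n} (hp : IsWalk A B j i d p)
    {a b : Fin (d+1)} (hab : (a:ℕ) < (b:ℕ)) (heq : p a = p b) :
    ∃ e, e < d ∧ ∃ q : Fin (e+1) → Fin n, IsWalk A B j i e q := by
  obtain ⟨h0, he, hl⟩ := hp
  have hbd : (b:ℕ) ≤ d := Nat.lt_succ_iff.mp b.2
  set c := (b:ℕ) - (a:ℕ) with hc
  set e := d - c with hE
  have hcd : c ≤ d := le_trans (Nat.sub_le _ _) hbd
  have hce : 1 ≤ c := by omega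
  have hed : e < d := by omega
  have hidx : ∀ s : ℕ, s ≤ e → (if s < (a:ℕ) then s else s + c) < d + 1 := by
    intro s hs; split <;> omega
  have hcongr : ∀ (x y : Fin (d+1)), (x:ℕ) = (y:ℕ) → p x = p y :=
    fun x y h => congrArg p (Fin.ext h)
  set q : Fin (e+1) → Fin n := fun t =>
    p ⟨if (t:ℕ) < (a:ℕ) then (t:ℕ) else (t:ℕ) + c, hidx t (Nat.lt_succ_iff.mp t.2)⟩ with hq
  refine ⟨e, hed, q, ?_, ?_, ?_⟩
  · have hq0 : q 0 = p 0 := by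
      rw [hq]
      dsimp only
      by_cases h : 0 < (a:ℕ)
      · apply hcongr; simp [h]
      · have ha0 : (a:ℕ) = 0 := by omega
        refine (hcongr _ b (by simp [ha0]; omega)).trans ?_
        rw [← heq]
        exact hcongr _ _ (by simp [ha0])
    rw [hq0]; exact h0
  · intro t
    have ht : (t:ℕ) < e := t.2
    rw [hq]
    dsimp only
    by_cases h1 : (t:ℕ) + 1 < (a:ℕ)
    · have h2 : (t:ℕ) < (a:ℕ) := by omega
      convert he ⟨(t:ℕ), by omega⟩ using 2
      · exact hcongr _ _ (by simp [Fin.val_succ, h1, h2])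
      · exact hcongr _ _ (by simp [Fin.coe_castSucc, h1, h2])
    · by_cases h2 : (t:ℕ) < (a:ℕ)
      · have ha : (t:ℕ) + 1 = (a:ℕ) := by omega
        convert he ⟨(t:ℕ), by omega⟩ using 2
        · refine (hcongr _ b (by simp [Fin.val_succ, h1]; omega)).trans ?_
          rw [← heq]
          exact hcongr _ _ (by simp [Fin.val_succ]; omega)
        · exact hcongr _ _ (by simp [Fin.coe_castSucc, h2])
      · convert he ⟨(t:ℕ) + c, by omega⟩ using 2
        · exact hcongr _ _ (by simp [Fin.val_succ, h1, h2]; omega)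
        · exact hcongr _ _ (by simp [Fin.coe_castSucc, h1, h2])
  · rw [hq]
    dsimp only
    refine (hcongr _ (Fin.last d) (by simp [Fin.last]; rw [if_neg (by omega)]; omega)).trans hl

lemma key_pos {n m : ℕ} {A : Matrix (Fin n) (Fin n) ℝ} {B : Matrix (Fin n) (Fin m) ℝ}
    (hMetzler : ∀ i k : Fin n, i ≠ k → 0 ≤ A i k) (hB : ∀ i j, 0 ≤ B i j) :
    ∀ d (i : Fin n), (∃ j : Fin m, ∃ p, IsWalk A B j i d p) →
      (∀ e, e < d → ∀ (j : Fin m) (p : Fin (e+1) → Fin n), ¬ IsWalk A B j i e p) →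
      (∀ j, 0 ≤ (A ^ d * B) i j) ∧ (∀ j, (∃ p, IsWalk A B j i d p) → 0 < (A ^ d * B) i j) := by
  intro d
  induction d using Nat.strong_induction_on with
  | _ d ih =>
    match d with
    | 0 =>
      intro i _ _
      constructor
      · intro j; rw [pow_zero, Matrix.one_mul]; exact hB i j
      · rintro j ⟨p, hp0, _, hpl⟩
        have : p 0 = i := by
          have : (0 : Fin 1) = Fin.last 0 := rfl
          rw [this, hpl]
        rw [this] at hp0
        rw [pow_zero, Matrix.one_mul]
        exact lt_of_le_of_ne (hB i j) (Ne.symm hp0)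
    | e + 1 =>
      intro i hex hmin
      -- each term of the sum is nonnegative
      have hterm : ∀ (j : Fin m) (k : Fin n), 0 ≤ A i k * (A ^ e * B) k j := by
        intro j k
        by_cases hz : (A ^ e * B) k j = 0
        · rw [hz, mul_zero]
        by_cases hAz : A i k = 0
        · rw [hAz, zero_mul]
        obtain ⟨r, hr⟩ := walk_of_ne_zero e k j hz
        have hki : k ≠ i := by
          rintro rfl
          exact hmin e (Nat.lt_succ_self e) j r hr
        have hkmin : ∀ e', e' < e → ∀ (j' : Fin m) (r' : Fin (e'+1) → Fin n),
            ¬ IsWalk A B j' k e' r' := by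
          intro e' he' j' r' hr'
          exact hmin (e'+1) (by omega) j' _ (isWalk_snoc hr' hAz)
        have := (ih e (Nat.lt_succ_self e) k ⟨j, r, hr⟩ hkmin).1 j
        exact mul_nonneg (hMetzler i k (Ne.symm hki)) this
      have hsum : ∀ j, (A ^ (e+1) * B) i j = ∑ k, A i k * (A ^ e * B) k j := by
        intro j; rw [pow_succ', Matrix.mul_assoc, Matrix.mul_apply]
      constructor
      · intro j; rw [hsum]; exact Finset.sum_nonneg fun k _ => hterm j k
      · rintro j ⟨p, hp⟩
        obtain ⟨hp0, hpe, hpl⟩ := hp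
        set k := p ((Fin.last e).castSucc) with hk
        have hA : A i k ≠ 0 := by
          have := hpe (Fin.last e)
          have hls : (Fin.last e).succ = Fin.last (e+1) := by ext; simp [Fin.last]
          rwa [hls, hpl] at this
        have hq : IsWalk A B j k e (p ∘ Fin.castSucc) := by
          refine ⟨?_, ?_, rfl⟩
          · have : Fin.castSucc (0 : Fin (e+1)) = 0 := by simp
            simpa [Function.comp, this] using hp0
          · intro t
            have h1 : ∀ x, (p ∘ Fin.castSucc) x = p (Fin.castSucc x) := fun _ => rfl
            rw [h1, h1, ← Fin.succ_castSucc]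
            exact hpe t.castSucc
        have hki : k ≠ i := by
          rintro rfl
          exact hmin e (Nat.lt_succ_self e) j _ hq
        have hkmin : ∀ e', e' < e → ∀ (j' : Fin m) (r' : Fin (e'+1) → Fin n),
            ¬ IsWalk A B j' k e' r' := by
          intro e' he' j' r' hr'
          exact hmin (e'+1) (by omega) j' _ (isWalk_snoc hr' hA)
        have hpos : 0 < A i k * (A ^ e * B) k j := by
          have h1 : 0 < A i k := lt_of_le_of_ne (hMetzler i k (Ne.symm hki)) (Ne.symm hA)
          have h2 := (ih e (Nat.lt_succ_self e) k ⟨j, _, hq⟩ hkmin).2 j ⟨_, hq⟩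
          exact mul_pos h1 h2
        rw [hsum]
        exact Finset.sum_pos' (fun k' _ => hterm j k') ⟨k, Finset.mem_univ k, hpos⟩

/-- for a positive system (Metzler `A`, nonnegative `B`) which is input
connectable, every state `i` admits `d ∈ {1,…,n}` and an input `j` with
`(A^{d-1}B)_{i,j} > 0`, and the system is completely herdable. -/
theorem positive_system_herdable_of_input_connectable
    {n m : ℕ} (A : Matrix (Fin n) (Fin n) ℝ) (B : Matrix (Fin n) (Fin m) ℝ)
    (hMetzler : ∀ i k : Fin n, i ≠ k → 0 ≤ A i k)
    (hB : ∀ i j, 0 ≤ B i j)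
    (hconn : ∀ i : Fin n, ∃ j : Fin m, Reach A B j i) :
    (∀ i : Fin n, ∃ (j : Fin m) (d : ℕ), 1 ≤ d ∧ d ≤ n ∧ 0 < (A ^ (d - 1) * B) i j) ∧
    ∃ α : Fin n × Fin m → ℝ, ∀ i, 0 < (ctrbMat A B).mulVec α i := by
  classical
  -- existence of a walk, for each i
  have hP : ∀ i : Fin n, ∃ d, ∃ j : Fin m, ∃ p : Fin (d+1) → Fin n, IsWalk A B j i d p := by
    intro i
    obtain ⟨j, d, p, h⟩ := hconn i
    exact ⟨d, j, p, h⟩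
  set N : Fin n → ℕ := fun i => Nat.find (hP i) with hN
  have hNspec : ∀ i, ∃ j : Fin m, ∃ p, IsWalk A B j i (N i) p := fun i => Nat.find_spec (hP i)
  have hNmin : ∀ i, ∀ e, e < N i → ∀ (j : Fin m) (p : Fin (e+1) → Fin n),
      ¬ IsWalk A B j i e p := by
    intro i e he j p hw
    exact Nat.find_min (hP i) he ⟨j, p, hw⟩
  -- minimal walks are injective, so N i + 1 ≤ n
  have hNlt : ∀ i, N i + 1 ≤ n := by
    intro i
    obtain ⟨j, p, hp⟩ := hNspec i
    have hinj : Function.Injective p := by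
      by_contra hni
      obtain ⟨a, b, heq, hne⟩ := Function.not_injective_iff.mp hni
      have : ∃ e, e < N i ∧ ∃ q : Fin (e+1) → Fin n, IsWalk A B j i e q := by
        rcases lt_trichotomy (a:ℕ) (b:ℕ) with h | h | h
        · exact isWalk_shorten hp h heq
        · exact absurd (Fin.ext h) hne
        · exact isWalk_shorten hp h heq.symm
      obtain ⟨e, he, q, hq⟩ := this
      exact hNmin i e he j q hq
    simpa using Fintype.card_le_of_injective p hinj
  have hKey := fun i => key_pos hMetzler hB (N i) i (hNspec i) (hNmin i)
  constructor
  · intro i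
    obtain ⟨j, p, hp⟩ := hNspec i
    exact ⟨j, N i + 1, by omega, hNlt i, by simpa using (hKey i).2 j ⟨p, hp⟩⟩
  · -- herdability
    by_cases hn : n = 0
    · subst hn
      exact ⟨fun _ => 0, fun i => i.elim0⟩
    have hn' : 0 < n := Nat.pos_of_ne_zero hn
    haveI : Nonempty (Fin n) := ⟨⟨0, hn'⟩⟩
    have hne : (Finset.univ : Finset (Fin n)).Nonempty := Finset.univ_nonempty
    set s : Fin n → ℕ → ℝ := fun i d => ∑ j, (A ^ d * B) i j with hs
    have hzero : ∀ i d, d < N i → s i d = 0 := by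
      intro i d hd
      refine Finset.sum_eq_zero fun j _ => ?_
      by_contra hz
      obtain ⟨p, hp⟩ := walk_of_ne_zero d i j hz
      exact hNmin i d hd j p hp
    have hspos : ∀ i, 0 < s i (N i) := by
      intro i
      obtain ⟨j, p, hp⟩ := hNspec i
      exact Finset.sum_pos' (fun j' _ => (hKey i).1 j')
        ⟨j, Finset.mem_univ j, (hKey i).2 j ⟨p, hp⟩⟩
    set K : ℝ := 1 + (Finset.univ : Finset (Fin n × Fin n)).sup'
        (Finset.univ_nonempty) (fun x => |s x.1 (x.2 : ℕ)|) with hK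
    have hKpos : 0 < K := by
      have := Finset.le_sup' (fun x : Fin n × Fin n => |s x.1 (x.2 : ℕ)|)
        (Finset.mem_univ (⟨⟨0, hn'⟩, ⟨0, hn'⟩⟩ : Fin n × Fin n))
      have h0 : (0:ℝ) ≤ |s ⟨0, hn'⟩ ((⟨0, hn'⟩ : Fin n) : ℕ)| := abs_nonneg _
      linarith
    have hKb : ∀ (i : Fin n) (d : Fin n), |s i (d : ℕ)| ≤ K - 1 := by
      intro i d
      have := Finset.le_sup' (fun x : Fin n × Fin n => |s x.1 (x.2 : ℕ)|)
        (Finset.mem_univ ((i, d) : Fin n × Fin n))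
      rw [hK]; linarith
    set cmin : ℝ := Finset.univ.inf' hne (fun i => s i (N i)) with hcmin
    have hcminpos : 0 < cmin := by
      rw [hcmin, Finset.lt_inf'_iff]
      exact fun i _ => hspos i
    have hcminle : ∀ i, cmin ≤ s i (N i) := fun i =>
      Finset.inf'_le _ (Finset.mem_univ i)
    set ε : ℝ := min 1 (cmin / (n * K + 1)) with hε
    have hεpos : 0 < ε := by
      refine lt_min one_pos (div_pos hcminpos ?_)
      positivity
    have hε1 : ε ≤ 1 := min_le_left _ _
    have hεc : (n : ℝ) * K * ε < cmin := by
      have h1 : ε ≤ cmin / (n * K + 1) := min_le_right _ _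
      have h2 : (0:ℝ) < n * K + 1 := by positivity
      rw [le_div_iff₀ h2] at h1
      nlinarith
    refine ⟨fun dj => ε ^ (dj.1 : ℕ), fun i => ?_⟩
    have hmv : (ctrbMat A B).mulVec (fun dj => ε ^ ((dj.1 : Fin n) : ℕ)) i
        = ∑ d : Fin n, s i (d : ℕ) * ε ^ (d : ℕ) := by
      simp only [Matrix.mulVec, dotProduct, ctrbMat, Matrix.of_apply, hs,
        Fintype.sum_prod_type, Finset.sum_mul]
    rw [hmv]
    set D : Fin n := ⟨N i, hNlt i⟩ with hD
    have hsplit : ∑ d : Fin n, s i (d : ℕ) * ε ^ (d : ℕ)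
        = s i (N i) * ε ^ (N i) + ∑ d ∈ Finset.univ.erase D, s i (d : ℕ) * ε ^ (d : ℕ) := by
      rw [← Finset.add_sum_erase Finset.univ _ (Finset.mem_univ D)]
    have herase : ∀ d ∈ Finset.univ.erase D,
        -(K * ε ^ (N i + 1)) ≤ s i (d : ℕ) * ε ^ (d : ℕ) := by
      intro d hd
      have hdD : (d : ℕ) ≠ N i := by
        intro h
        exact (Finset.mem_erase.mp hd).1 (Fin.ext h)
      rcases lt_or_gt_of_ne hdD with h | h
      · rw [hzero i d h, zero_mul]
        have : (0:ℝ) ≤ K * ε ^ (N i + 1) := by positivity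
        linarith
      · have h1 : ε ^ (d : ℕ) ≤ ε ^ (N i + 1) :=
          pow_le_pow_of_le_one hεpos.le hε1 h
        have h2 : -(K - 1) ≤ s i (d : ℕ) := by
          have := hKb i d
          have := neg_abs_le (s i (d : ℕ))
          linarith
        have h3 : (0:ℝ) ≤ ε ^ (d : ℕ) := by positivity
        nlinarith [pow_nonneg hεpos.le (N i + 1)]
    have hcard : (Finset.univ.erase D).card = n - 1 := by
      rw [Finset.card_erase_of_mem (Finset.mem_univ D)]
      simp
    have hsum_lb : -((n:ℝ) * (K * ε ^ (N i + 1)))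
        ≤ ∑ d ∈ Finset.univ.erase D, s i (d : ℕ) * ε ^ (d : ℕ) := by
      have := Finset.sum_le_sum herase
      rw [Finset.sum_const, hcard] at this
      rw [nsmul_eq_mul] at this
      have hc1 : ((n - 1 : ℕ) : ℝ) ≤ (n : ℝ) := by exact_mod_cast Nat.sub_le n 1
      have hX : (0:ℝ) ≤ K * ε ^ (N i + 1) := by positivity
      nlinarith [mul_le_mul_of_nonneg_right hc1 hX]
    have hfin : 0 < s i (N i) * ε ^ (N i) - (n:ℝ) * (K * ε ^ (N i + 1)) := by
      have h1 : 0 < ε ^ (N i) := pow_pos hεpos _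
      have h2 : ε ^ (N i + 1) = ε ^ (N i) * ε := pow_succ _ _
      have h3 : cmin ≤ s i (N i) := hcminle i
      rw [h2]
      have := mul_pos h1 (sub_pos.mpr hεc)
      nlinarith
    rw [hsplit]
    linarith
end
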